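/- arXiv:2212.00497 — 5 statements merged into one kernel-verified Lean document; each statement's English description precedes it below -/
import Mathlib

section
/- Let K ≥ 1 be a natural number and let w ≥ 0, ξ ≥ 0, P ≥ 0, P_c > 0 be real constants. Let R : Fin K → ℝ satisfy R k ≥ 0 for all k, and set S = ∑_k R k. Then S / (w·(P + ξ·S) + P_c) is the greatest element of the set of real numbers η for which there exist real numbers a, b and a vector r : Fin K → ℝ such that η ≤ a²/b, a² ≤ ∑_k r k, w·(P + ξ·∑_k r k) + P_c ≤ b, and r k ≤ R k for every k. -/
/-- Scalar core of Lemma 1: the epigraph reformulation of the fractional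
(energy-efficiency) objective `S / (w*(P + ξ*S) + P_c)`. -/
theorem stmt_0 (K : ℕ) (hK : 1 ≤ K) (w ξ P Pc : ℝ)
    (hw : 0 ≤ w) (hξ : 0 ≤ ξ) (hP : 0 ≤ P) (hPc : 0 < Pc)
    (R : Fin K → ℝ) (hR : ∀ k, 0 ≤ R k) (S : ℝ) (hS : S = ∑ k, R k) :
    IsGreatest
      {η : ℝ | ∃ a b : ℝ, ∃ r : Fin K → ℝ,
        η ≤ a ^ 2 / b ∧ a ^ 2 ≤ ∑ k, r k ∧
        w * (P + ξ * (∑ k, r k)) + Pc ≤ b ∧ ∀ k, r k ≤ R k}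
      (S / (w * (P + ξ * S) + Pc)) := by
  have hS0 : 0 ≤ S := by
    rw [hS]; exact Finset.sum_nonneg fun k _ => hR k
  constructor
  · refine ⟨Real.sqrt S, w * (P + ξ * S) + Pc, R, ?_, ?_, ?_, fun k => le_rfl⟩
    · rw [Real.sq_sqrt hS0]
    · rw [Real.sq_sqrt hS0, hS]
    · rw [hS]
  · rintro η ⟨a, b, r, hη, ha, hb, hr⟩
    have hT : ∑ k, r k ≤ S := by
      rw [hS]; exact Finset.sum_le_sum fun k _ => hr k
    have hT0 : 0 ≤ ∑ k, r k := le_trans (sq_nonneg a) ha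
    have hDpos : 0 < w * (P + ξ * S) + Pc := by positivity
    have hbpos : 0 < b := lt_of_lt_of_le (by positivity) hb
    calc η ≤ a ^ 2 / b := hη
      _ ≤ (∑ k, r k) / b := by gcongr
      _ ≤ S / (w * (P + ξ * S) + Pc) := by
          rw [div_le_div_iff₀ hbpos hDpos]
          nlinarith [mul_nonneg hS0 (sub_nonneg.2 hb), mul_nonneg (mul_nonneg hw hP) (sub_nonneg.2 hT), mul_nonneg hPc.le (sub_nonneg.2 hT)]
end

section
/- Let D be a nonempty type, K ≥ 1 a natural number, and let w ≥ 0, ξ ≥ 0, P_c > 0 be real constants. Let R : D → Fin K → ℝ satisfy R d k ≥ 0 for all d, k, and let p : D → ℝ satisfy p d ≥ 0 for all d. Define F d = (∑_k R d k) / (w·(p d + ξ·∑_k R d k) + P_c). Then the set {η ∈ ℝ | ∃ d ∈ D, ∃ a b ∈ ℝ, ∃ r : Fin K → ℝ, η ≤ a²/b ∧ a² ≤ ∑_k r k ∧ w·(p d + ξ·∑_k r k) + P_c ≤ b ∧ (∀ k, r k ≤ R d k)} equals the set {η ∈ ℝ | ∃ d ∈ D, η ≤ F d}. -/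
/-- Lemma 1 of the paper in abstract form: the epigraph-reformulated feasible
set of `η`'s equals the set of `η`'s dominated by the fractional objective. -/
theorem stmt_1 {D : Type*} [Nonempty D] (K : ℕ) (hK : 1 ≤ K) (w ξ Pc : ℝ)
    (hw : 0 ≤ w) (hξ : 0 ≤ ξ) (hPc : 0 < Pc)
    (R : D → Fin K → ℝ) (hR : ∀ d k, 0 ≤ R d k)
    (p : D → ℝ) (hp : ∀ d, 0 ≤ p d)
    (F : D → ℝ)
    (hF : ∀ d, F d = (∑ k, R d k) / (w * (p d + ξ * (∑ k, R d k)) + Pc)) :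
    {η : ℝ | ∃ d : D, ∃ a b : ℝ, ∃ r : Fin K → ℝ,
        η ≤ a ^ 2 / b ∧ a ^ 2 ≤ ∑ k, r k ∧
        w * (p d + ξ * (∑ k, r k)) + Pc ≤ b ∧ ∀ k, r k ≤ R d k}
      = {η : ℝ | ∃ d : D, η ≤ F d} := by
  ext η
  simp only [Set.mem_setOf_eq]
  constructor
  · rintro ⟨d, a, b, r, hη, ha, hb, hr⟩
    refine ⟨d, hη.trans ?_⟩
    have hsr : ∑ k, r k ≤ ∑ k, R d k := Finset.sum_le_sum fun k _ => hr k
    have hden_r : 0 < w * (p d + ξ * (∑ k, r k)) + Pc := by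
      have hr0 : 0 ≤ ∑ k, r k := le_trans (sq_nonneg a) ha
      nlinarith [mul_nonneg hw (hp d), mul_nonneg (mul_nonneg hw hξ) hr0]
    have hden_R : 0 < w * (p d + ξ * (∑ k, R d k)) + Pc := by
      have hR0 : 0 ≤ ∑ k, R d k := Finset.sum_nonneg fun k _ => hR d k
      nlinarith [mul_nonneg hw (hp d), mul_nonneg (mul_nonneg hw hξ) hR0]
    have hb0 : 0 < b := lt_of_lt_of_le hden_r hb
    rw [hF]
    -- a^2/b ≤ (∑ r)/(denom r) ≤ (∑ R)/(denom R)
    have step1 : a ^ 2 / b ≤ (∑ k, r k) / (w * (p d + ξ * (∑ k, r k)) + Pc) := by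
      apply div_le_div₀ (le_trans (sq_nonneg a) ha |>.trans le_rfl) ha hden_r hb
    have step2 : (∑ k, r k) / (w * (p d + ξ * (∑ k, r k)) + Pc)
        ≤ (∑ k, R d k) / (w * (p d + ξ * (∑ k, R d k)) + Pc) := by
      rw [div_le_div_iff₀ hden_r hden_R]
      have hr0 : 0 ≤ ∑ k, r k := le_trans (sq_nonneg a) ha
      nlinarith [mul_le_mul_of_nonneg_right hsr
        (show (0:ℝ) ≤ w * p d + Pc from add_nonneg (mul_nonneg hw (hp d)) hPc.le)]
    exact step1.trans step2
  · rintro ⟨d, hη⟩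
    refine ⟨d, Real.sqrt (∑ k, R d k), w * (p d + ξ * (∑ k, R d k)) + Pc,
      R d, ?_, ?_, le_rfl, fun k => le_rfl⟩
    · rwa [Real.sq_sqrt (Finset.sum_nonneg fun k _ => hR d k), ← hF]
    · rw [Real.sq_sqrt (Finset.sum_nonneg fun k _ => hR d k)]
end

section
/- Let K ≥ 1, fix an index k ∈ Fin K and a real number σ > 0. For p : Fin K → ℂ define I(p) = ∑_{i ≠ k} |p i|² + σ². Then for all p, p̆ : Fin K → ℂ, it holds that 2·Re(conj(p̆ k)·(p k))/I(p̆) − (|p̆ k|/I(p̆))²·I(p) ≤ |p k|²/I(p), and equality holds when p = p̆. -/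
/-! The first-order expansion is a lower bound because the gap is a perfect square:
with `b = |p k|`, `y = I p` and `t = |p̆ k| / I p̆`, one has
`b² / y - (2 t b - t² y) = (b - t y)² / y ≥ 0`, while `Re (conj (p̆ k) * p k) ≤ |p̆ k| b`
as a real part is at most the modulus. At `p = p̆` the real part is exactly `|p̆ k|²`. -/

theorem two_mul_mul_sub_sq_mul_le_sq_div {t b y : ℝ} (hy : 0 < y) :
    2 * t * b - t ^ 2 * y ≤ b ^ 2 / y := by
  have hgap : b ^ 2 / y - (2 * t * b - t ^ 2 * y) = (b - t * y) ^ 2 / y := by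
    field_simp
    ring
  linarith [div_nonneg (sq_nonneg (b - t * y)) hy.le]

theorem Complex.re_conj_mul_le_norm_mul (z w : ℂ) :
    ((starRingEnd ℂ) z * w).re ≤ ‖z‖ * ‖w‖ := by
  simpa only [norm_mul, Complex.norm_conj] using Complex.re_le_norm ((starRingEnd ℂ) z * w)

theorem Complex.re_conj_mul_self (z : ℂ) : ((starRingEnd ℂ) z * z).re = ‖z‖ ^ 2 := by
  rw [Complex.conj_mul']
  norm_cast

theorem sca_lower_bound_le {z w : ℂ} {x y : ℝ} (hx : 0 ≤ x) (hy : 0 < y) :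
    2 * ((starRingEnd ℂ) z * w).re / x - (‖z‖ / x) ^ 2 * y ≤ ‖w‖ ^ 2 / y := by
  calc 2 * ((starRingEnd ℂ) z * w).re / x - (‖z‖ / x) ^ 2 * y
      ≤ 2 * (‖z‖ * ‖w‖) / x - (‖z‖ / x) ^ 2 * y := by
        gcongr
        exact Complex.re_conj_mul_le_norm_mul z w
    _ = 2 * (‖z‖ / x) * ‖w‖ - (‖z‖ / x) ^ 2 * y := by ring
    _ ≤ ‖w‖ ^ 2 / y := two_mul_mul_sub_sq_mul_le_sq_div hy

theorem sca_lower_bound_self (z : ℂ) (x : ℝ) :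
    2 * ((starRingEnd ℂ) z * z).re / x - (‖z‖ / x) ^ 2 * x = ‖z‖ ^ 2 / x := by
  rw [Complex.re_conj_mul_self]
  rcases eq_or_ne x 0 with rfl | hx
  · simp
  · field_simp
    ring

theorem stmt_5_general (K : ℕ) (k : Fin K) (σ : ℝ) (hσ : 0 < σ)
    (I : (Fin K → ℂ) → ℝ)
    (hI : ∀ p, I p = (∑ i ∈ Finset.univ.erase k, ‖p i‖ ^ 2) + σ ^ 2) :
    ∀ p pb : Fin K → ℂ,
      (2 * ((starRingEnd ℂ) (pb k) * p k).re / I pb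
          - (‖pb k‖ / I pb) ^ 2 * I p
        ≤ ‖p k‖ ^ 2 / I p) ∧
      (2 * ((starRingEnd ℂ) (pb k) * pb k).re / I pb
          - (‖pb k‖ / I pb) ^ 2 * I pb
        = ‖pb k‖ ^ 2 / I pb) := by
  intro p pb
  have hI_pos : ∀ q, 0 < I q := fun q => by
    rw [hI q]
    positivity
  exact ⟨sca_lower_bound_le (hI_pos pb).le (hI_pos p), sca_lower_bound_self (pb k) (I pb)⟩

/-- SCA lower bound of the SINR (equation (32) of the paper): with
`I p = ∑_{i ≠ k} |p i|² + σ²`, the SINR `|p k|² / I p` is lower bounded by its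
first-order expansion at any reference point `pb`, with equality at `p = pb`. -/
theorem stmt_5 (K : ℕ) (hK : 1 ≤ K) (k : Fin K) (σ : ℝ) (hσ : 0 < σ)
    (I : (Fin K → ℂ) → ℝ)
    (hI : ∀ p, I p = (∑ i ∈ Finset.univ.erase k, ‖p i‖ ^ 2) + σ ^ 2) :
    ∀ p pb : Fin K → ℂ,
      (2 * ((starRingEnd ℂ) (pb k) * p k).re / I pb
          - (‖pb k‖ / I pb) ^ 2 * I p
        ≤ ‖p k‖ ^ 2 / I p) ∧
      (2 * ((starRingEnd ℂ) (pb k) * pb k).re / I pb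
          - (‖pb k‖ / I pb) ^ 2 * I pb
        = ‖pb k‖ ^ 2 / I pb) :=
  stmt_5_general K k σ hσ I hI
end

section
/- Let c_t, c_r be real numbers and d_t, d_r complex numbers. Then the infimum of the set A = {c_t·β_t² + c_r·β_r² − 2β_t·Re(conj(d_t)·exp(i·φ_t)) − 2β_r·Re(conj(d_r)·exp(i·φ_r)) : β_t ∈ [0,1], β_r ∈ [0,1], β_t² + β_r² = 1, φ_t ∈ ℝ, φ_r ∈ ℝ} equals the infimum of the set B = {c_t·sin²ϑ + c_r·cos²ϑ − 2|d_t|·sin ϑ − 2|d_r|·cos ϑ : ϑ ∈ [0, π/2]}. -/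
/-!
For fixed amplitudes, the phase `φ` only enters through `Re (conj d · e^{iφ}) ≤ ‖d‖`, with
equality at `φ = arg d`; and the amplitude pairs `(βt, βr)` on the closed quarter circle are
exactly the pairs `(sin ϑ, cos ϑ)` with `ϑ ∈ [0, π/2]`. Hence every value of the first set
dominates a value of the second, and every value of the second is attained in the first, which
forces equal infima, bounded or not.
-/

open Complex in
lemma Complex.re_conj_mul_exp_le_norm (d : ℂ) (φ : ℝ) :
    (starRingEnd ℂ d * exp (I * φ)).re ≤ ‖d‖ :=
  calc (starRingEnd ℂ d * exp (I * φ)).re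
      ≤ ‖starRingEnd ℂ d * exp (I * φ)‖ := re_le_norm _
    _ = ‖d‖ := by rw [norm_mul, norm_conj, mul_comm I, norm_exp_ofReal_mul_I, mul_one]

open Complex in
lemma Complex.re_conj_mul_exp_arg (d : ℂ) :
    (starRingEnd ℂ d * exp (I * arg d)).re = ‖d‖ := by
  rcases eq_or_ne d 0 with rfl | hd
  · simp
  rw [mul_comm I, exp_mul_I, ← ofReal_cos, ← ofReal_sin, cos_arg hd, sin_arg]
  simp only [mul_re, add_re, add_im, conj_re, conj_im, ofReal_re, ofReal_im, I_re, I_im, mul_im]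
  field_simp
  rw [Complex.sq_norm, normSq_apply]
  ring

open Real in
lemma Real.exists_mem_Icc_sin_eq_cos_eq {x y : ℝ} (hx : 0 ≤ x) (hy : 0 ≤ y)
    (hxy : x ^ 2 + y ^ 2 = 1) :
    ∃ ϑ ∈ Set.Icc 0 (π / 2), sin ϑ = x ∧ cos ϑ = y := by
  have hx1 : x ≤ 1 := by nlinarith
  refine ⟨arcsin x, ⟨arcsin_nonneg.2 hx, arcsin_le_pi_div_two x⟩,
    sin_arcsin (by linarith) hx1, ?_⟩
  rw [cos_arcsin, show 1 - x ^ 2 = y ^ 2 by linarith, sqrt_sq hy]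

/-- Reduction of the per-element STARS subproblem (35) to the single-variable
problem (36): the two optimal values coincide. -/
theorem stmt_7 (ct cr : ℝ) (dt dr : ℂ) :
    sInf {v : ℝ | ∃ βt βr φt φr : ℝ,
        βt ∈ Set.Icc (0 : ℝ) 1 ∧ βr ∈ Set.Icc (0 : ℝ) 1 ∧ βt ^ 2 + βr ^ 2 = 1 ∧
        v = ct * βt ^ 2 + cr * βr ^ 2
            - 2 * βt * ((starRingEnd ℂ) dt * Complex.exp (Complex.I * φt)).re
            - 2 * βr * ((starRingEnd ℂ) dr * Complex.exp (Complex.I * φr)).re}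
    = sInf {v : ℝ | ∃ ϑ ∈ Set.Icc (0 : ℝ) (Real.pi / 2),
        v = ct * Real.sin ϑ ^ 2 + cr * Real.cos ϑ ^ 2
            - 2 * ‖dt‖ * Real.sin ϑ - 2 * ‖dr‖ * Real.cos ϑ} := by
  apply csInf_eq_csInf_of_forall_exists_le
  · rintro _ ⟨βt, βr, φt, φr, ⟨hβt, -⟩, ⟨hβr, -⟩, hsum, rfl⟩
    obtain ⟨ϑ, hϑ, rfl, rfl⟩ := Real.exists_mem_Icc_sin_eq_cos_eq hβt hβr hsum
    refine ⟨_, ⟨ϑ, hϑ, rfl⟩, ?_⟩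
    have ht := mul_le_mul_of_nonneg_left (dt.re_conj_mul_exp_le_norm φt) hβt
    have hr := mul_le_mul_of_nonneg_left (dr.re_conj_mul_exp_le_norm φr) hβr
    linarith
  · rintro _ ⟨ϑ, ⟨hϑ₀, hϑ₁⟩, rfl⟩
    have hsin : Real.sin ϑ ∈ Set.Icc (0 : ℝ) 1 :=
      ⟨Real.sin_nonneg_of_nonneg_of_le_pi hϑ₀ (by linarith [Real.pi_pos]), Real.sin_le_one ϑ⟩
    have hcos : Real.cos ϑ ∈ Set.Icc (0 : ℝ) 1 :=
      ⟨Real.cos_nonneg_of_mem_Icc ⟨by linarith [Real.pi_pos], hϑ₁⟩, Real.cos_le_one ϑ⟩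
    refine ⟨_, ⟨_, _, dt.arg, dr.arg, hsin, hcos, Real.sin_sq_add_cos_sq ϑ, rfl⟩, le_of_eq ?_⟩
    rw [dt.re_conj_mul_exp_arg, dr.re_conj_mul_exp_arg]
    ring
end

section
/- Let N, R ≥ 1, let A be an R×R complex Hermitian matrix, let B and X be N×R complex matrices, and fix indices i ∈ Fin N, j ∈ Fin R. Define h(X) = Re(trace(Xᴴ·X·A)) − 2·Re(trace(Xᴴ·B)), and set q = B i j − ∑_{l ≠ j} X i l · A l j (equivalently, q = X i j · A j j − (X·A) i j + B i j). Then for every ζ ∈ ℂ, replacing the (i,j) entry of X by ζ yields h = Re(A j j)·|ζ|² − 2·Re(conj(q)·ζ) + h₀, where h₀ is the value of h when the (i,j) entry of X is replaced by 0. -/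
open Matrix

/-!
Write the matrix with `(i, j)` entry `ζ` as `Y₀ + single i j ζ`, where `Y₀` has that entry `0`.
Since `A` is Hermitian, the two cross terms of `tr((Y₀ + E)ᴴ(Y₀ + E)A)` with `E = single i j ζ`
are complex conjugates, so they add up to `2 Re(conj ζ · (Y₀ A) i j)`, and `(Y₀ A) i j` is the sum
over `l ≠ j`.
-/

namespace Matrix

section

variable {m n 𝕜 : Type*} [Fintype m] [Fintype n] [RCLike 𝕜]

theorem trace_conjTranspose_mul_mul_of_isHermitian {A : Matrix n n 𝕜} (hA : A.IsHermitian)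
    (Y E : Matrix m n 𝕜) : trace (Yᴴ * E * A) = star (trace (Eᴴ * Y * A)) := by
  rw [← trace_conjTranspose, conjTranspose_mul, conjTranspose_mul, conjTranspose_conjTranspose,
    hA.eq, trace_mul_cycle, Matrix.mul_assoc]

theorem re_trace_conjTranspose_add_mul_add_mul {A : Matrix n n 𝕜} (hA : A.IsHermitian)
    (Y E : Matrix m n 𝕜) :
    RCLike.re (trace ((Y + E)ᴴ * (Y + E) * A)) = RCLike.re (trace (Yᴴ * Y * A))
      + 2 * RCLike.re (trace (Eᴴ * Y * A)) + RCLike.re (trace (Eᴴ * E * A)) := by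
  simp only [conjTranspose_add, Matrix.add_mul, Matrix.mul_add, trace_add, map_add,
    trace_conjTranspose_mul_mul_of_isHermitian hA Y E, RCLike.star_def, RCLike.conj_re]
  ring

end

section

variable {m n α : Type*} [DecidableEq m] [DecidableEq n]

theorem updateRow_update_eq_add_single [AddZeroClass α] (X : Matrix m n α) (i : m) (j : n)
    (c : α) : X.updateRow i (Function.update (X i) j c)
      = X.updateRow i (Function.update (X i) j 0) + single i j c := by
  ext k l
  by_cases hk : k = i <;> by_cases hl : l = j <;> simp [hk, hl, Ne.symm]

theorem trace_conjTranspose_single_mul [Fintype m] [Fintype n] [NonUnitalNonAssocSemiring α]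
    [StarRing α]
    (i : m) (j : n) (c : α) (M : Matrix m n α) :
    trace ((single i j c)ᴴ * M) = star c * M i j := by
  rw [conjTranspose_single, trace_single_mul, smul_eq_mul]

theorem mul_apply_updateRow_update_zero [Fintype n] [NonUnitalNonAssocSemiring α]
    (X : Matrix m n α) (A : Matrix n n α) (i : m) (j : n) :
    (X.updateRow i (Function.update (X i) j 0) * A) i j
      = ∑ l ∈ Finset.univ.erase j, X i l * A l j := by
  rw [mul_apply, ← Finset.add_sum_erase _ _ (Finset.mem_univ j)]
  simp only [updateRow_self, Function.update_self, zero_mul, zero_add]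
  refine Finset.sum_congr rfl fun l hl => ?_
  rw [Function.update_of_ne (Finset.ne_of_mem_erase hl)]

end

end Matrix

theorem stmt_9_general (N R : ℕ)
    (A : Matrix (Fin R) (Fin R) ℂ) (hA : A.IsHermitian)
    (B X : Matrix (Fin N) (Fin R) ℂ) (i : Fin N) (j : Fin R)
    (h : Matrix (Fin N) (Fin R) ℂ → ℝ)
    (hh : ∀ Y, h Y = (Matrix.trace (Yᴴ * Y * A)).re
        - 2 * (Matrix.trace (Yᴴ * B)).re)
    (q : ℂ) (hq : q = B i j - ∑ l ∈ Finset.univ.erase j, X i l * A l j) :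
    ∀ ζ : ℂ, h (X.updateRow i (Function.update (X i) j ζ))
      = (A j j).re * ‖ζ‖ ^ 2 - 2 * ((starRingEnd ℂ) q * ζ).re
        + h (X.updateRow i (Function.update (X i) j 0)) := by
  intro ζ
  rw [updateRow_update_eq_add_single X i j ζ]
  set Y₀ := X.updateRow i (Function.update (X i) j 0)
  have hcross : trace ((single i j ζ)ᴴ * Y₀ * A)
      = star ζ * ∑ l ∈ Finset.univ.erase j, X i l * A l j := by
    rw [Matrix.mul_assoc, trace_conjTranspose_single_mul, mul_apply_updateRow_update_zero]
  have hdiag : trace ((single i j ζ)ᴴ * single i j ζ * A) = star ζ * ζ * A j j := by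
    rw [Matrix.mul_assoc, trace_conjTranspose_single_mul, single_mul_apply_same, mul_assoc]
  have hlin : trace ((Y₀ + single i j ζ)ᴴ * B) = trace (Y₀ᴴ * B) + star ζ * B i j := by
    rw [conjTranspose_add, Matrix.add_mul, trace_add, trace_conjTranspose_single_mul]
  have hquad := re_trace_conjTranspose_add_mul_add_mul hA Y₀ (single i j ζ)
  simp only [RCLike.re_to_complex] at hquad
  rw [hh, hh, hquad, hcross, hdiag, hlin, hq, Complex.sq_norm, Complex.normSq_apply]
  simp only [Complex.star_def, Complex.add_re, Complex.mul_re, Complex.sub_re, Complex.sub_im,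
    Complex.conj_re, Complex.conj_im, Complex.mul_im]
  ring

/-- Element-wise quadratic expansion of the analog beamformer objective
`h(X) = Re tr(XᴴXA) − 2 Re tr(XᴴB)` in the `(i,j)` entry of `X`, with
coefficient `q = B i j − ∑_{l ≠ j} X i l · A l j` (equation (40) of the paper). -/
theorem stmt_9 (N R : ℕ) (hN : 1 ≤ N) (hR : 1 ≤ R)
    (A : Matrix (Fin R) (Fin R) ℂ) (hA : A.IsHermitian)
    (B X : Matrix (Fin N) (Fin R) ℂ) (i : Fin N) (j : Fin R)
    (h : Matrix (Fin N) (Fin R) ℂ → ℝ)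
    (hh : ∀ Y, h Y = (Matrix.trace (Yᴴ * Y * A)).re
        - 2 * (Matrix.trace (Yᴴ * B)).re)
    (q : ℂ) (hq : q = B i j - ∑ l ∈ Finset.univ.erase j, X i l * A l j) :
    ∀ ζ : ℂ, h (X.updateRow i (Function.update (X i) j ζ))
      = (A j j).re * ‖ζ‖ ^ 2 - 2 * ((starRingEnd ℂ) q * ζ).re
        + h (X.updateRow i (Function.update (X i) j 0)) :=
  stmt_9_general N R A hA B X i j h hh q hq
end
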